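/- Let R be a commutative ring with ideals A, B and n ≥ 3. If a ∈ A and b ∈ B with either a ∈ AB or b ∈ AB, then [Eᵢⱼ(a), Eⱼᵢ(b)] ∈ E(n,R,AB) for all i ≠ j. In particular [Eᵢⱼ(a b₁), Eⱼᵢ(b₂)] ∈ E(n,R,AB) for a ∈ A, b₁, b₂ ∈ B. -/

import Mathlib

/-!
`E(n,R,I)` is normalised by `E(n,R)` and contains the elementary matrices of level `I`. Hence
`⁅x, g⁆ = x * (g * x⁻¹ * g⁻¹)` lies in it when `x = Eᵢⱼ(a)` with `a ∈ I` and `g ∈ E(n,R)`, and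
symmetrically `⁅g, y⁆ = (g * y * g⁻¹) * y⁻¹` when `y = Eⱼᵢ(b)` with `b ∈ I`. Take `I = AB`; for
the second claim, `a * b₁ ∈ AB`.
-/

def elemSL (n : ℕ) (R : Type*) [CommRing R] (i j : Fin n) (hij : i ≠ j) (t : R) :
    Matrix.SpecialLinearGroup (Fin n) R :=
  ⟨Matrix.transvection i j t, Matrix.det_transvection_of_ne i j hij t⟩

/-- The (absolute) elementary subgroup `E(n,R)`. -/
def elemGroup (n : ℕ) (R : Type*) [CommRing R] :
    Subgroup (Matrix.SpecialLinearGroup (Fin n) R) :=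
  Subgroup.closure {x | ∃ (i j : Fin n) (h : i ≠ j) (t : R), x = elemSL n R i j h t}

/-- The unrelativised elementary subgroup `E(n,I)` of level `I`. -/
def elemGroupLevel (n : ℕ) (R : Type*) [CommRing R] (I : Ideal R) :
    Subgroup (Matrix.SpecialLinearGroup (Fin n) R) :=
  Subgroup.closure {x | ∃ (i j : Fin n) (h : i ≠ j), ∃ c ∈ I, x = elemSL n R i j h c}

/-- The relative elementary subgroup `E(n,R,I)`: the normal closure of `E(n,I)`
in `E(n,R)`, generated by `E(n,R)`-conjugates of elementary matrices of level `I`. -/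
def relElemGroup (n : ℕ) (R : Type*) [CommRing R] (I : Ideal R) :
    Subgroup (Matrix.SpecialLinearGroup (Fin n) R) :=
  Subgroup.closure {x | ∃ g ∈ elemGroup n R, ∃ (i j : Fin n) (h : i ≠ j),
    ∃ c ∈ I, x = g * elemSL n R i j h c * g⁻¹}

open scoped commutatorElement

section

variable {n : ℕ} {R : Type*} [CommRing R]

lemma elemSL_mul (i j : Fin n) (h : i ≠ j) (s t : R) :
    elemSL n R i j h s * elemSL n R i j h t = elemSL n R i j h (s + t) :=
  Subtype.ext (Matrix.transvection_mul_transvection_same i j h s t)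

lemma elemSL_inv (i j : Fin n) (h : i ≠ j) (t : R) :
    (elemSL n R i j h t)⁻¹ = elemSL n R i j h (-t) := by
  refine inv_eq_of_mul_eq_one_right ?_
  rw [elemSL_mul, add_neg_cancel]
  exact Subtype.ext (Matrix.transvection_zero i j)

lemma elemSL_mem_elemGroup (i j : Fin n) (h : i ≠ j) (t : R) :
    elemSL n R i j h t ∈ elemGroup n R :=
  Subgroup.subset_closure ⟨i, j, h, t, rfl⟩

lemma conj_elemSL_mem_relElemGroup {I : Ideal R} {g : Matrix.SpecialLinearGroup (Fin n) R}
    (hg : g ∈ elemGroup n R) (i j : Fin n) (h : i ≠ j) {c : R} (hc : c ∈ I) :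
    g * elemSL n R i j h c * g⁻¹ ∈ relElemGroup n R I :=
  Subgroup.subset_closure ⟨g, hg, i, j, h, c, hc, rfl⟩

lemma elemSL_mem_relElemGroup {I : Ideal R} (i j : Fin n) (h : i ≠ j) {c : R} (hc : c ∈ I) :
    elemSL n R i j h c ∈ relElemGroup n R I := by
  simpa using conj_elemSL_mem_relElemGroup (one_mem _) i j h hc

lemma commutatorElement_elemSL_left_mem_relElemGroup {I : Ideal R}
    {g : Matrix.SpecialLinearGroup (Fin n) R} (hg : g ∈ elemGroup n R)
    (i j : Fin n) (h : i ≠ j) {a : R} (ha : a ∈ I) :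
    ⁅elemSL n R i j h a, g⁆ ∈ relElemGroup n R I := by
  have hconj := conj_elemSL_mem_relElemGroup hg i j h (neg_mem ha)
  rw [← elemSL_inv] at hconj
  rw [commutatorElement_def]
  simpa only [mul_assoc] using mul_mem (elemSL_mem_relElemGroup i j h ha) hconj

lemma commutatorElement_elemSL_right_mem_relElemGroup {I : Ideal R}
    {g : Matrix.SpecialLinearGroup (Fin n) R} (hg : g ∈ elemGroup n R)
    (i j : Fin n) (h : i ≠ j) {b : R} (hb : b ∈ I) :
    ⁅g, elemSL n R i j h b⁆ ∈ relElemGroup n R I := by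
  rw [commutatorElement_def, elemSL_inv]
  exact mul_mem (conj_elemSL_mem_relElemGroup hg i j h hb)
    (elemSL_mem_relElemGroup i j h (neg_mem hb))

end

theorem elem_commutator_trivial_of_mem_product_general (n : ℕ) (R : Type*) [CommRing R]
    (A B : Ideal R) (i j : Fin n) (hij : i ≠ j) :
    (∀ a b : R, a ∈ A → b ∈ B → (a ∈ A * B ∨ b ∈ A * B) →
      ⁅elemSL n R i j hij a, elemSL n R j i hij.symm b⁆ ∈ relElemGroup n R (A * B)) ∧
    (∀ a b₁ b₂ : R, a ∈ A → b₁ ∈ B → b₂ ∈ B →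
      ⁅elemSL n R i j hij (a * b₁), elemSL n R j i hij.symm b₂⁆ ∈
        relElemGroup n R (A * B)) := by
  refine ⟨fun a b _ _ hab => ?_, fun a b₁ b₂ ha hb₁ _ => ?_⟩
  · rcases hab with ha | hb
    · exact commutatorElement_elemSL_left_mem_relElemGroup (elemSL_mem_elemGroup _ _ _ _)
        i j hij ha
    · exact commutatorElement_elemSL_right_mem_relElemGroup (elemSL_mem_elemGroup _ _ _ _)
        j i hij.symm hb
  · exact commutatorElement_elemSL_left_mem_relElemGroup (elemSL_mem_elemGroup _ _ _ _)
      i j hij (Ideal.mul_mem_mul ha hb₁)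

theorem elem_commutator_trivial_of_mem_product (n : ℕ) (hn : 3 ≤ n) (R : Type*) [CommRing R]
    (A B : Ideal R) (i j : Fin n) (hij : i ≠ j) :
    (∀ a b : R, a ∈ A → b ∈ B → (a ∈ A * B ∨ b ∈ A * B) →
      ⁅elemSL n R i j hij a, elemSL n R j i hij.symm b⁆ ∈ relElemGroup n R (A * B)) ∧
    (∀ a b₁ b₂ : R, a ∈ A → b₁ ∈ B → b₂ ∈ B →
      ⁅elemSL n R i j hij (a * b₁), elemSL n R j i hij.symm b₂⁆ ∈
        relElemGroup n R (A * B)) :=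
  elem_commutator_trivial_of_mem_product_general n R A B i j hij
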